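/- arXiv:1301.7633 — 2 statements merged into one kernel-verified Lean document; each statement's English description precedes it below -/
import Mathlib

section
/- Let X be a projective scheme in P^N and p ∈ X a point. Fix homogeneous coordinates x_0, …, x_N on P^N such that p = [1:0:⋯:0]. Assume that X is defined by homogeneous polynomials f_1, …, f_r in a neighborhood of p, and write f_j = Σ_{i=1}^{d_j} x_0^{d_j − i} f_j^i, where d_j = deg f_j and f_j^i ∈ ℂ[x_1, …, x_N] is homogeneous of degree i. Then F_p(X), viewed as a subscheme of F_p(P^N) ≅ Proj ℂ[x_1, …, x_N], is defined by the polynomials { f_j^i : 1 ≤ j ≤ r, 1 ≤ i ≤ d_j }. -/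
/-!
Common framework: classical projective geometry over ℂ, with projective space
`ℙ^{n-1} = Pr n` realized as the projectivization of `ℂ^n`, algebraic subsets as
zero loci of homogeneous polynomials, lines/linear subspaces via linear subspaces,
degree and multiplicity of curves via hyperplane counting, the Seshadri constant
of `O_X(1)` at a point via the curve-infimum formula, and the invariant `d_p(X)`
via local generation of the ideal sheaf by forms of a given degree.
-/

open scoped Classical
open Function Set

noncomputable section

namespace PaperSC

/-- Projective space of lines in `ℂ^n`; `Pr (N+1)` is the usual `ℙ^N` over `ℂ`. -/
abbrev Pr (n : ℕ) := Projectivization ℂ (Fin n → ℂ)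

/-- Polynomial ring in `n` variables over `ℂ` (homogeneous coordinates). -/
abbrev Poly (n : ℕ) := MvPolynomial (Fin n) ℂ

variable {n : ℕ}

/-- A (homogeneous) polynomial vanishes at a projective point. -/
def VanishAt (f : Poly n) (x : Pr n) : Prop :=
  ∀ (v : Fin n → ℂ) (hv : v ≠ 0), Projectivization.mk ℂ v hv = x → MvPolynomial.eval v f = 0

/-- Common zero locus in projective space of a set of polynomials. -/
def zeroLocus (S : Set (Poly n)) : Set (Pr n) := {x | ∀ f ∈ S, VanishAt f x}

/-- The polynomial is homogeneous (of some degree). -/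
def IsHomog (f : Poly n) : Prop := ∃ d, f.IsHomogeneous d

/-- Zariski-closed algebraic subsets of projective space. -/
def IsAlgSet (X : Set (Pr n)) : Prop :=
  ∃ S : Set (Poly n), (∀ f ∈ S, IsHomog f) ∧ X = zeroLocus S

/-- A projective subvariety: a nonempty irreducible Zariski-closed subset. -/
def IsSubvariety (X : Set (Pr n)) : Prop :=
  IsAlgSet X ∧ X.Nonempty ∧
    ∀ A B : Set (Pr n), IsAlgSet A → IsAlgSet B → X ⊆ A ∪ B → X ⊆ A ∨ X ⊆ B

/-- Dimension of a subset of projective space: the supremum of the lengths of strict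
chains of subvarieties contained in it. -/
def dim (X : Set (Pr n)) : ℕ :=
  sSup {k | ∃ Z : Fin (k + 1) → Set (Pr n),
    (∀ i, IsSubvariety (Z i) ∧ Z i ⊆ X) ∧ StrictMono Z}

/-- A linear subvariety of projective space, given by a linear subspace of the
indicated (linear-algebra) rank. -/
def IsLinearOfRank (r : ℕ) (L : Set (Pr n)) : Prop :=
  ∃ W : Submodule ℂ (Fin n → ℂ), Module.finrank ℂ W = r ∧
    L = {x : Pr n | x.submodule ≤ W}

/-- A line in projective space (projective curve of degree 1). -/
def IsLine (L : Set (Pr n)) : Prop := IsLinearOfRank 2 L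

/-- A hyperplane in `Pr n = ℙ^{n-1}`. -/
def IsHyperplane (H : Set (Pr n)) : Prop := IsLinearOfRank (n - 1) H

/-- A projective curve: a subvariety of dimension 1. -/
def IsCurve (C : Set (Pr n)) : Prop := IsSubvariety C ∧ dim C = 1

/-- Degree of a (reduced irreducible) curve in projective space: the maximal number of
points in which a hyperplane not containing it meets it. -/
def degCurve (C : Set (Pr n)) : ℕ :=
  sSup {k | ∃ H, IsHyperplane H ∧ ¬ C ⊆ H ∧ k = (C ∩ H).ncard}

/-- Multiplicity of a curve at a point `p`: `deg C` minus the maximal number of points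
away from `p` in which a hyperplane through `p` (not containing `C`) meets `C`. -/
def multAt (C : Set (Pr n)) (p : Pr n) : ℕ :=
  degCurve C -
    sSup {k | ∃ H, IsHyperplane H ∧ p ∈ H ∧ ¬ C ⊆ H ∧ k = ((C ∩ H) \ {p}).ncard}

/-- The Seshadri constant `ε(X, O_X(1); p)`: the infimum of `deg C / mult_p C` over
reduced irreducible curves `C ⊆ X` through `p`. -/
def seshadri (X : Set (Pr n)) (p : Pr n) : ℝ :=
  sInf {r : ℝ | ∃ C : Set (Pr n), IsCurve C ∧ C ⊆ X ∧ p ∈ C ∧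
    r = (degCurve C : ℝ) / (multAt C p : ℝ)}

/-- `F_p(X)`: the set of lines on `X` passing through `p`. -/
def linesThrough (X : Set (Pr n)) (p : Pr n) : Set (Set (Pr n)) :=
  {L | IsLine L ∧ L ⊆ X ∧ p ∈ L}

/-- The cone `Cone F_p(X)` with vertex `p` over the lines of `X` through `p`. -/
def coneOfLines (X : Set (Pr n)) (p : Pr n) : Set (Pr n) :=
  {p} ∪ ⋃ L ∈ linesThrough X p, L

/-- Degree of a projective variety `X`: the maximal (finite) number of points in which a
linear subvariety of complementary dimension meets `X`. -/
def degVar (X : Set (Pr n)) : ℕ :=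
  sSup {k | ∃ L, IsLinearOfRank (n - dim X) L ∧ (X ∩ L).Finite ∧ k = (X ∩ L).ncard}

/-- Dehomogenization in the affine chart `x_i ≠ 0` (substitute `x_i = 1`). -/
def subst1 (i : Fin n) : Poly n →ₐ[ℂ] Poly n :=
  MvPolynomial.aeval (Function.update MvPolynomial.X i 1)

/-- Affine coordinates of a projective point in the chart `x_i ≠ 0`. -/
def acoord (i : Fin n) (p : Pr n) : Fin n → ℂ := fun j => p.rep j / p.rep i

/-- The maximal ideal of the point with affine coordinates `a`. -/
def mIdeal (a : Fin n → ℂ) : Ideal (Poly n) :=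
  Ideal.span (Set.range fun j => MvPolynomial.X j - MvPolynomial.C (a j))

/-- Homogeneous polynomials of degree `d` vanishing on `X`,
i.e. `H^0(ℙ^{n-1}, I_X ⊗ O(d))`. -/
def homVan (X : Set (Pr n)) (d : ℕ) : Set (Poly n) :=
  {f | f.IsHomogeneous d ∧ ∀ x ∈ X, VanishAt f x}

/-- All homogeneous polynomials vanishing on `X`. -/
def vanPolys (X : Set (Pr n)) : Set (Poly n) := ⋃ d, homVan X d

/-- The homogeneous ideal of `X`. -/
def homIdeal (X : Set (Pr n)) : Ideal (Poly n) := Ideal.span (vanPolys X)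

/-- The affine ideal of `X` in the chart `x_i ≠ 0`. -/
def affIdeal (i : Fin n) (X : Set (Pr n)) : Ideal (Poly n) :=
  Ideal.span (⇑(subst1 i) '' vanPolys X)

/-- `X` is cut out scheme-theoretically at `p` by hypersurfaces of degree `d`:
the stalk at `p` of the ideal sheaf `I_X` is generated by the degree-`d` forms
vanishing on `X`, i.e. the natural map
`H^0(ℙ^N, I_X ⊗ O(d)) ⊗ O → I_X ⊗ O(d)` is surjective at `p`. -/
def CutOutAt (X : Set (Pr n)) (p : Pr n) (d : ℕ) : Prop :=
  ∀ f ∈ vanPolys X, ∃ (i : Fin n) (s : Poly n), p.rep i ≠ 0 ∧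
    MvPolynomial.eval (acoord i p) s ≠ 0 ∧
    s * subst1 i f ∈ Ideal.span (⇑(subst1 i) '' homVan X d)

/-- `d_p(X)`: the least degree `d` such that `X` is cut out at `p` by degree-`d`
hypersurfaces. -/
def dP (X : Set (Pr n)) (p : Pr n) : ℕ := sInf {d | CutOutAt X p d}

/-- `ord_p` of the effective divisor cut on `X` by the homogeneous polynomial `f`:
the largest `m` with the local equation of `f` lying in `m_p^m ⊆ O_{X,p}`. -/
def ordAt (X : Set (Pr n)) (p : Pr n) (f : Poly n) : ℕ :=
  sSup {m | ∃ (i : Fin n) (s : Poly n), p.rep i ≠ 0 ∧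
    MvPolynomial.eval (acoord i p) s ≠ 0 ∧
    s * subst1 i f ∈ mIdeal (acoord i p) ^ m ⊔ affIdeal i X}

/-- Differential of a polynomial at the affine point `a`. -/
def diffAt (a : Fin n → ℂ) (g : Poly n) : (Fin n → ℂ) →ₗ[ℂ] ℂ :=
  ∑ j : Fin n, MvPolynomial.eval a (MvPolynomial.pderiv j g) • LinearMap.proj j

/-- Zariski tangent space of `X` at `p`, computed in the chart `x_i ≠ 0` (it contains the
one extra "dummy" direction of the substituted variable). -/
def tangentAt (X : Set (Pr n)) (i : Fin n) (p : Pr n) : Submodule ℂ (Fin n → ℂ) :=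
  ⨅ f ∈ vanPolys X, LinearMap.ker (diffAt (acoord i p) (subst1 i f))

/-- Smoothness of `X` at `p` (Jacobian criterion). -/
def IsSmoothPt (X : Set (Pr n)) (p : Pr n) : Prop :=
  ∃ i : Fin n, p.rep i ≠ 0 ∧ Module.finrank ℂ ↥(tangentAt X i p) = dim X + 1

/-- A smooth projective set. -/
def IsSmooth (X : Set (Pr n)) : Prop := ∀ p ∈ X, IsSmoothPt X p

/-- `P` holds for a general point of `X`: it holds away from a proper closed subset. -/
def GeneralPt (X : Set (Pr n)) (P : Pr n → Prop) : Prop :=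
  ∃ Z : Set (Pr n), IsAlgSet Z ∧ ¬ X ⊆ Z ∧ ∀ p ∈ X \ Z, P p

/-- The coordinate vector of the point `[1:0:⋯:0]`. -/
def e0vec (n : ℕ) : Fin (n + 1) → ℂ := Fin.cons 1 0

lemma e0vec_ne (n : ℕ) : e0vec n ≠ 0 := by
  intro h
  simpa [e0vec] using congrFun h 0

/-- The point `p = [1:0:⋯:0] ∈ ℙ^n`. -/
def pt0 (n : ℕ) : Pr (n + 1) := Projectivization.mk ℂ (e0vec n) (e0vec_ne n)

/-- The line through `[1:0:⋯:0]` with direction `u ∈ ℙ^{n-1}`; this realizes the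
identification `F_p(ℙ^n) ≅ ℙ^{n-1} = Proj ℂ[x_1,…,x_n]`. -/
def dirLine (u : Pr n) : Set (Pr (n + 1)) :=
  {x | x.submodule ≤ Submodule.span ℂ
    ({Fin.cons 1 0, Fin.cons 0 u.rep} : Set (Fin (n + 1) → ℂ))}

/-- Embedding `ℂ[x_1,…,x_n] → ℂ[x_0,x_1,…,x_n]`. -/
def emb : Poly n →ₐ[ℂ] Poly (n + 1) := MvPolynomial.rename Fin.succ

/-- An effective Cartier divisor on `X ⊆ ℙ^{n-1}`, given by local equations
`num a / den a` (ratios of homogeneous forms of equal degrees) on an open cover of `X`,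
whose numerators are local nonzerodivisors and which agree up to units on overlaps. -/
structure EffCartier (n : ℕ) (X : Set (Pr n)) where
  idx : Type
  U : idx → Set (Pr n)
  isOpen : ∀ a, ∃ Z, IsAlgSet Z ∧ U a = X \ Z
  covers : ∀ x ∈ X, ∃ a, x ∈ U a
  num : idx → Poly n
  den : idx → Poly n
  deg_eq : ∀ a, ∃ d, (num a).IsHomogeneous d ∧ (den a).IsHomogeneous d
  den_ne : ∀ a, ∀ x ∈ U a, ¬ VanishAt (den a) x
  regular : ∀ a, ∀ q ∈ U a, ∀ i : Fin n, q.rep i ≠ 0 →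
    ∀ g s : Poly n, MvPolynomial.eval (acoord i q) s ≠ 0 →
      s * g * subst1 i (num a) ∈ affIdeal i X →
      ∃ t : Poly n, MvPolynomial.eval (acoord i q) t ≠ 0 ∧ t * g ∈ affIdeal i X
  compat : ∀ a b, ∀ q, q ∈ U a → q ∈ U b → ∀ i : Fin n, q.rep i ≠ 0 →
    ∃ s : Poly n, MvPolynomial.eval (acoord i q) s ≠ 0 ∧
      s * subst1 i (num a * den b) ∈
        Ideal.span {subst1 i (num b * den a)} ⊔ affIdeal i X

namespace EffCartier

variable {n : ℕ} {X : Set (Pr n)}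

/-- Support of the divisor. -/
def supp (D : EffCartier n X) : Set (Pr n) :=
  {x | x ∈ X ∧ ∃ a, x ∈ D.U a ∧ VanishAt (D.num a) x}

/-- `ord_p(D)`: the largest `m` such that a local equation of `D` lies in `m_p^m`. -/
def ordAtPt (D : EffCartier n X) (p : Pr n) : ℕ :=
  sSup {m | ∃ a, p ∈ D.U a ∧ ∃ (i : Fin n) (s : Poly n), p.rep i ≠ 0 ∧
    MvPolynomial.eval (acoord i p) s ≠ 0 ∧
    s * subst1 i (D.num a) ∈ mIdeal (acoord i p) ^ m ⊔ affIdeal i X}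

/-- Local intersection multiplicity of `D` with the curve `C` at `q`:
`dim_ℂ O_{C,q}/(local equation)`, computed as the stabilized value of the
finite-dimensional truncations. -/
def locMult (D : EffCartier n X) (C : Set (Pr n)) (q : Pr n) : ℕ :=
  sSup {m | ∃ (a : D.idx) (i : Fin n) (M : ℕ), q ∈ D.U a ∧ q.rep i ≠ 0 ∧
    m = Module.finrank ℂ
      (Poly n ⧸ (Ideal.span {subst1 i (D.num a)} ⊔ affIdeal i C ⊔
        mIdeal (acoord i q) ^ M))}

/-- The intersection number `C · D`: the sum of local intersection multiplicities. -/
def inter (D : EffCartier n X) (C : Set (Pr n)) : ℕ :=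
  ∑ᶠ q ∈ C ∩ D.supp, D.locMult C q

end EffCartier

/-- A conic: a smooth projective curve of degree 2. -/
def IsConic (C : Set (Pr n)) : Prop := IsCurve C ∧ degCurve C = 2 ∧ IsSmooth C

/-- Rows of a matrix-shaped tuple. -/
def row {a b : ℕ} (t : Fin a × Fin b → ℂ) (i : Fin a) : Fin b → ℂ := fun j => t (i, j)

/-- The image of the degree-2 parametrization `[s:u] ↦ s²t₀ + su t₁ + u²t₂`; for linearly
independent `t₀,t₁,t₂` this is exactly a conic, and all conics arise this way. -/
def conicOf (t : Fin 3 × Fin n → ℂ) : Set (Pr n) :=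
  {x | ∃ s u : ℂ,
    ∃ h : (s ^ 2 • row t 0 + (s * u) • row t 1 + u ^ 2 • row t 2) ≠ 0,
      Projectivization.mk ℂ (s ^ 2 • row t 0 + (s * u) • row t 1 + u ^ 2 • row t 2) h = x}

/-- Parameter space of (parametrized) conics on `Y` through `p`. Two parameters give the
same conic exactly along an orbit of the 4-dimensional group `GL₂(ℂ) × scalings`, so
`dim R_p(Y) = affDim (conicParams Y p) - 4`. -/
def conicParams (Y : Set (Pr n)) (p : Pr n) : Set (Fin 3 × Fin n → ℂ) :=
  {t | LinearIndependent ℂ (row t) ∧ conicOf t ⊆ Y ∧ p ∈ conicOf t}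

/-- Affine algebraic subsets of an affine space `ι → ℂ`. -/
def AffAlg {ι : Type} (S : Set (ι → ℂ)) : Prop :=
  ∃ T : Set (MvPolynomial ι ℂ), S = {a | ∀ f ∈ T, MvPolynomial.eval a f = 0}

/-- Affine varieties: nonempty irreducible affine algebraic sets. -/
def AffVariety {ι : Type} (S : Set (ι → ℂ)) : Prop :=
  AffAlg S ∧ S.Nonempty ∧
    ∀ A B : Set (ι → ℂ), AffAlg A → AffAlg B → S ⊆ A ∪ B → S ⊆ A ∨ S ⊆ B

/-- Zariski closure in affine space. -/
def aclosure {ι : Type} (S : Set (ι → ℂ)) : Set (ι → ℂ) :=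
  ⋂₀ {Z | AffAlg Z ∧ S ⊆ Z}

/-- Dimension of a subset of affine space, via chains of subvarieties of its closure. -/
def affDim {ι : Type} (S : Set (ι → ℂ)) : ℕ :=
  sSup {k | ∃ Z : Fin (k + 1) → Set (ι → ℂ),
    (∀ i, AffVariety (Z i) ∧ Z i ⊆ aclosure S) ∧ StrictMono Z}

/-- An irreducible component of (the closure of) `S`. -/
def IsAffComponent {ι : Type} (T S : Set (ι → ℂ)) : Prop :=
  AffVariety T ∧ T ⊆ aclosure S ∧
    ∀ T' : Set (ι → ℂ), AffVariety T' → T' ⊆ aclosure S → T ⊆ T' → T = T'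

/-- `P` holds for a general element of `S ⊆ (ι → ℂ)`. -/
def GeneralAff {ι : Type} (S : Set (ι → ℂ)) (P : (ι → ℂ) → Prop) : Prop :=
  ∃ Z : Set (ι → ℂ), AffAlg Z ∧ ¬ S ⊆ Z ∧ ∀ w ∈ S \ Z, P w

/-- The linear form with coefficient vector `w`. -/
def linForm (w : Fin n → ℂ) : Poly n :=
  ∑ j : Fin n, MvPolynomial.C (w j) * MvPolynomial.X j

/-- The hyperplane with coefficient vector `w`. -/
def hypOf (w : Fin n → ℂ) : Set (Pr n) := zeroLocus {linForm w}

/-- `I_Y ⊗ O(d)` is globally generated: at every point the stalk of the ideal sheaf of `Y`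
is generated by the degree-`d` forms vanishing on `Y`. -/
def SheafGenByDeg (Y : Set (Pr n)) (d : ℕ) : Prop :=
  ∀ q : Pr n, ∀ f ∈ vanPolys Y, ∃ (i : Fin n) (s : Poly n), q.rep i ≠ 0 ∧
    MvPolynomial.eval (acoord i q) s ≠ 0 ∧
    s * subst1 i f ∈ Ideal.span (⇑(subst1 i) '' homVan Y d)

/-- Surjectivity of `H^0(ℙ^N, I_C ⊗ O(1)) ⊗ O_Y → I_{C/Y} ⊗ O_Y(1)`: at every point of
`Y`, the stalk of `I_{C/Y}` is generated by the linear forms vanishing on `C`. -/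
def LinearCutOnY (Y C : Set (Pr n)) : Prop :=
  ∀ q ∈ Y, ∀ f ∈ vanPolys C, ∃ (i : Fin n) (s : Poly n), q.rep i ≠ 0 ∧
    MvPolynomial.eval (acoord i q) s ≠ 0 ∧
    s * subst1 i f ∈ Ideal.span (⇑(subst1 i) '' homVan C 1) ⊔ affIdeal i Y

/-- The projective transformation induced by a linear automorphism. -/
def pmap (g : (Fin n → ℂ) ≃ₗ[ℂ] (Fin n → ℂ)) : Pr n → Pr n :=
  Projectivization.map g.toLinearMap g.injective

/-- `Y` is a homogeneous space: the projective transformations preserving `Y` act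
transitively on `Y`. -/
def IsHomogSpace (Y : Set (Pr n)) : Prop :=
  ∀ p ∈ Y, ∀ q ∈ Y, ∃ g : (Fin n → ℂ) ≃ₗ[ℂ] (Fin n → ℂ),
    pmap g '' Y = Y ∧ pmap g p = q

/-- `Y ⊆ ℙ^N` is a rational homogeneous space of Picard number one, embedded by the ample
generator of its Picard group: a smooth homogeneous subvariety, every prime divisor of
which is (set-theoretically) a hypersurface section (Picard number one), carrying a line
(which forces the embedding to be by the ample generator and rules out abelian factors). -/
def IsRatHomog1 (Y : Set (Pr n)) : Prop :=
  IsSubvariety Y ∧ IsSmooth Y ∧ IsHomogSpace Y ∧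
    (∀ D : Set (Pr n), IsSubvariety D → D ⊆ Y → dim D + 1 = dim Y →
      ∃ g : Poly n, IsHomog g ∧ D = Y ∩ zeroLocus {g}) ∧
    ∃ p ∈ Y, (linesThrough Y p).Nonempty

/-- The Fano index `i(Y)` of a rational homogeneous space `Y` of Picard number one
embedded by the ample generator, characterized geometrically by
`dim F_p(Y) = i(Y) - 2`, i.e. `i(Y) = dim (Cone F_p(Y)) + 1`. -/
def fanoIndex (Y : Set (Pr n)) : ℕ :=
  sSup {k | ∃ p ∈ Y, k = dim (coneOfLines Y p) + 1}

/-- A polynomial function (in the coefficients) on tuples of polynomials. -/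
def IsPolyFun {κ : Type} {m : ℕ} (Φ : (κ → Poly m) → ℂ) : Prop :=
  ∃ F : MvPolynomial ((Fin m →₀ ℕ) × κ) ℂ, ∀ g,
    Φ g = MvPolynomial.eval (fun mc => MvPolynomial.coeff mc.1 (g mc.2)) F

/-- `P` holds for a general tuple of polynomials satisfying the shape condition `Q`:
there is a polynomial function in the coefficients, not identically zero on tuples
satisfying `Q`, whose nonvanishing implies `P`. -/
def GeneralTuple {κ : Type} {m : ℕ} (Q P : (κ → Poly m) → Prop) : Prop :=
  ∃ Φ : (κ → Poly m) → ℂ, IsPolyFun Φ ∧ (∃ g, Q g ∧ Φ g ≠ 0) ∧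
    ∀ g, Q g → Φ g ≠ 0 → P g

/-- The homogeneous coordinate ring of `C`. -/
abbrev CoordRing (C : Set (Pr n)) := Poly n ⧸ homIdeal C

/-- The ring whose graded pieces carry the conormal module `I_C/(I_C² + I_X)` of `C ⊆ X`. -/
abbrev ConormalRing (X C : Set (Pr n)) :=
  Poly n ⧸ (homIdeal C * homIdeal C ⊔ homIdeal X)

/-- Degree-`d` graded piece of the coordinate ring of `C`. -/
def coordGrade (C : Set (Pr n)) (d : ℕ) : Submodule ℂ (CoordRing C) :=
  Submodule.span ℂ (⇑(Ideal.Quotient.mk (homIdeal C)) ''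
    {f : Poly n | f.IsHomogeneous d})

/-- Degree-`d` graded piece of the conormal module `N^∨_{C/X} = I_C/(I_C² + I_X)`. -/
def conormalGrade (X C : Set (Pr n)) (d : ℕ) : Submodule ℂ (ConormalRing X C) :=
  Submodule.span ℂ (⇑(Ideal.Quotient.mk (homIdeal C * homIdeal C ⊔ homIdeal X)) ''
    homVan C d)

/-- The normal bundle `N_{C/X}` is trivial of rank `k` : equivalently its dual, the
conormal sheaf — the sheafification of the graded module `I_C/(I_C²+I_X)` — is isomorphic
to `O_C^k`, i.e. in all large degrees the graded conormal module is isomorphic, as a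
graded module over the coordinate ring of `C` (generated in degree one), to
(the truncation of) the free module `(S_C)^k`. -/
def ConormalTrivial (X C : Set (Pr n)) (k : ℕ) : Prop :=
  ∃ e0 : ℕ,
    ∃ ψ : ∀ d : ℕ, e0 ≤ d → ((Fin k → ↥(coordGrade C d)) ≃ₗ[ℂ] ↥(conormalGrade X C d)),
      ∀ (d : ℕ) (hd : e0 ≤ d) (h : Poly n), h.IsHomogeneous 1 →
        ∀ (x : Fin k → ↥(coordGrade C d)) (y : Fin k → ↥(coordGrade C (d + 1))),
          (∀ j, (y j : CoordRing C) =
            Ideal.Quotient.mk (homIdeal C) h * (x j : CoordRing C)) →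
          ((ψ (d + 1) (hd.trans (Nat.le_succ d)) y : ConormalRing X C) =
            Ideal.Quotient.mk (homIdeal C * homIdeal C ⊔ homIdeal X) h *
              (ψ d hd x : ConormalRing X C))

end PaperSC

/-!
Along the line through `p = [c:0:⋯:0]` with direction `u`, the expansion of `f_j` gives
`f_j(c, z u) = ∑ᵢ c^{d_j - i} f_j^i(u) zⁱ`, so that line lies in `V(f_1, …, f_r)` exactly when
all `f_j^i(u)` vanish. The scheme `X` agrees with `V(f_1, …, f_r)` only off `Z`; but an
equation `h` of `Z` with `h(p) ≠ 0` restricts to a nonzero polynomial on every line through `p`,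
and a polynomial along the line that vanishes wherever `h` does not vanishes identically
(its product with `h` vanishes everywhere). This moves membership from the part of the line
outside `Z` to the whole line, in both directions.
-/
namespace MvPolynomial

theorem IsHomogeneous.eval_smul {R σ : Type*} [CommSemiring R] {φ : MvPolynomial σ R} {d : ℕ}
    (hφ : φ.IsHomogeneous d) (c : R) (v : σ → R) : eval (c • v) φ = c ^ d * eval v φ := by
  rw [eval_eq, eval_eq, Finset.mul_sum]
  refine Finset.sum_congr rfl fun m hm => ?_
  have hdeg : ∑ i ∈ m.support, m i = d := by
    rw [← hφ (mem_support_iff.mp hm)]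
    simp [Finsupp.weight, Finsupp.linearCombination, Finsupp.sum]
  simp only [Pi.smul_apply, smul_eq_mul, mul_pow, Finset.prod_mul_distrib,
    Finset.prod_pow_eq_pow_sum, hdeg]
  ring

theorem polynomial_eval_aeval {R σ : Type*} [CommSemiring R] (φ : σ → Polynomial R)
    (p : MvPolynomial σ R) (z : R) :
    (aeval φ p).eval z = eval (fun i => (φ i).eval z) p := by
  rw [aeval_def, polynomial_eval_eval₂]
  congr 1
  ext; simp

section InfiniteField

variable {K σ : Type*} [Field K] [Infinite K] {g h : MvPolynomial σ K} {z₁ : K}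

theorem eval_eq_zero_of_eval_ne_zero_imp (φ : σ → Polynomial K)
    (hz₁ : eval (fun i => (φ i).eval z₁) h ≠ 0)
    (hgh : ∀ z, eval (fun i => (φ i).eval z) h ≠ 0 → eval (fun i => (φ i).eval z) g = 0)
    (z : K) : eval (fun i => (φ i).eval z) g = 0 := by
  have hprod : aeval φ g * aeval φ h = 0 := Polynomial.funext fun z => by
    by_cases hz : eval (fun i => (φ i).eval z) h = 0 <;>
      simp [polynomial_eval_aeval, hz, hgh z]
  have hh : aeval φ h ≠ 0 := fun h0 =>
    hz₁ (by rw [← polynomial_eval_aeval, h0, Polynomial.eval_zero])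
  rw [← polynomial_eval_aeval, (mul_eq_zero.mp hprod).resolve_right hh, Polynomial.eval_zero]

open AffineMap in
theorem eval_lineMap_eq_zero_of_eval_ne_zero_imp {v w : σ → K}
    (hz₁ : eval (lineMap (k := K) v w z₁) h ≠ 0)
    (hgh : ∀ z, eval (lineMap (k := K) v w z) h ≠ 0 → eval (lineMap (k := K) v w z) g = 0)
    (z : K) : eval (lineMap (k := K) v w z) g = 0 := by
  have hφ : ∀ z : K,
      (fun i => (Polynomial.C (v i) + Polynomial.X * Polynomial.C (w i - v i)).eval z) =
        lineMap (k := K) v w z := fun z => by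
    ext i; simp [lineMap_apply_module']; ring
  simp only [← hφ] at hz₁ hgh ⊢
  exact eval_eq_zero_of_eval_ne_zero_imp _ hz₁ hgh z

end InfiniteField

end MvPolynomial

theorem Polynomial.eq_zero_of_forall_sum_mul_pow_eq_zero {R : Type*} [CommRing R] [IsDomain R]
    [Infinite R] {s : Finset ℕ} {b : ℕ → R} (h : ∀ z, ∑ i ∈ s, b i * z ^ i = 0) {i : ℕ}
    (hi : i ∈ s) : b i = 0 := by
  have hP : ∑ k ∈ s, C (b k) * X ^ k = 0 :=
    Polynomial.funext fun z => by simpa [Polynomial.eval_finsetSum] using h z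
  simpa [Polynomial.finsetSum_coeff, Polynomial.coeff_C_mul_X_pow, hi] using
    congrArg (Polynomial.coeff · i) hP

theorem Projectivization.lineMap_ne_zero_of_mk_ne {K V : Type*} [Field K] [AddCommGroup V]
    [Module K V] {v w : V} {hv : v ≠ 0} {hw : w ≠ 0}
    (hvw : Projectivization.mk K v hv ≠ Projectivization.mk K w hw) (z : K) :
    AffineMap.lineMap v w z ≠ 0 := by
  have hli : LinearIndependent K ![v, w] :=
    (Projectivization.independent_mk_iff_LinearIndependent hv hw).mp
      ((Projectivization.independent_pair_iff_ne _ _).mpr hvw)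
  intro h0
  obtain ⟨h1, rfl⟩ := LinearIndependent.pair_iff.mp hli (1 - z) z
    (by rwa [← AffineMap.lineMap_apply_module])
  simp at h1

namespace PaperSC

open MvPolynomial

variable {N : ℕ}

theorem vanishAt_iff_eval_rep {n d : ℕ} {g : Poly n} (hg : g.IsHomogeneous d) (x : Pr n) :
    VanishAt g x ↔ eval x.rep g = 0 := by
  refine ⟨fun h => h _ x.rep_nonzero x.mk_rep, fun h v hv hx => ?_⟩
  subst hx
  obtain ⟨a, ha⟩ := Projectivization.exists_smul_eq_mk_rep ℂ v hv
  rw [← ha, Units.smul_def, hg.eval_smul] at h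
  exact (mul_eq_zero.mp h).resolve_left (pow_ne_zero _ a.ne_zero)

def dirPlane (w : Fin N → ℂ) : Submodule ℂ (Fin (N + 1) → ℂ) :=
  Submodule.span ℂ {Fin.cons 1 0, Fin.cons 0 w}

theorem mk_mem_dirLine_iff (u : Pr N) {v : Fin (N + 1) → ℂ} (hv : v ≠ 0) :
    Projectivization.mk ℂ v hv ∈ dirLine u ↔ v ∈ dirPlane u.rep := by
  rw [dirLine, Set.mem_ofPred_eq, Projectivization.submodule_mk,
    Submodule.span_singleton_le_iff_mem, dirPlane]

theorem mem_dirPlane_iff (w : Fin N → ℂ) (v : Fin (N + 1) → ℂ) :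
    v ∈ dirPlane w ↔ ∃ s t : ℂ, v = Fin.cons s (t • w) := by
  have hcons : ∀ s t : ℂ, s • (Fin.cons 1 0 : Fin (N + 1) → ℂ) + t • Fin.cons 0 w =
      Fin.cons s (t • w) := fun s t => by
    ext i; cases i using Fin.cases <;> simp
  simp only [dirPlane, Submodule.mem_span_pair, hcons, eq_comm]

theorem eval_cons_emb (s : ℂ) (w : Fin N → ℂ) (g : Poly N) :
    eval (Fin.cons s w : Fin (N + 1) → ℂ) (emb g) = eval w g := by
  rw [emb, eval_rename, Fin.cons_comp_succ]

theorem eval_cons_smul_eq_sum {F : Poly (N + 1)} {d : ℕ} {fI : ℕ → Poly N}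
    (hfI : ∀ i, (fI i).IsHomogeneous i)
    (hdec : F = ∑ i ∈ Finset.Icc 1 d, MvPolynomial.X 0 ^ (d - i) * emb (fI i))
    (s t : ℂ) (w : Fin N → ℂ) :
    eval (Fin.cons s (t • w)) F = ∑ i ∈ Finset.Icc 1 d, s ^ (d - i) * eval w (fI i) * t ^ i := by
  rw [hdec, map_sum]
  refine Finset.sum_congr rfl fun i _ => ?_
  rw [map_mul, map_pow, eval_X, eval_cons_emb, (hfI i).eval_smul]
  simp only [Fin.cons_zero]
  ring

theorem exists_eval_cons_ne_zero_of_pt0_notMem {T : Set (Poly (N + 1))}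
    (hp : pt0 N ∉ zeroLocus T) :
    ∃ h ∈ T, ∃ c : ℂ, c ≠ 0 ∧ eval (Fin.cons c 0 : Fin (N + 1) → ℂ) h ≠ 0 := by
  simp only [zeroLocus, VanishAt, Set.mem_ofPred_eq, not_forall] at hp
  obtain ⟨h, hT, v, hv, hvp, hvh⟩ := hp
  obtain ⟨a, rfl⟩ := (Projectivization.mk_eq_mk_iff ℂ _ _ hv (e0vec_ne N)).mp hvp
  have hcons : (Fin.cons (a : ℂ) 0 : Fin (N + 1) → ℂ) = a • e0vec N := by
    ext i; cases i using Fin.cases <;> simp [e0vec, Units.smul_def]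
  exact ⟨h, hT, a, a.ne_zero, hcons ▸ hvh⟩

section Components

variable {r : ℕ} {f : Fin r → Poly (N + 1)} {db : Fin r → ℕ} {fI : Fin r → ℕ → Poly N}
  (hfI : ∀ j i, (fI j i).IsHomogeneous i)
  (hdec : ∀ j, f j = ∑ i ∈ Finset.Icc 1 (db j), MvPolynomial.X 0 ^ (db j - i) * emb (fI j i))
include hfI hdec

theorem dirLine_subset_zeroLocus {u : Pr N}
    (hvan : ∀ j, ∀ i ∈ Finset.Icc 1 (db j), eval u.rep (fI j i) = 0) :
    dirLine u ⊆ zeroLocus (Set.range f) := by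
  rintro _ hx _ ⟨j, rfl⟩ v hv rfl
  obtain ⟨s, t, rfl⟩ := (mem_dirPlane_iff _ v).mp ((mk_mem_dirLine_iff u hv).mp hx)
  rw [eval_cons_smul_eq_sum (hfI j) (hdec j)]
  exact Finset.sum_eq_zero fun i hi => by rw [hvan j i hi, mul_zero, zero_mul]

variable {X : Set (Pr (N + 1))} {h : Poly (N + 1)} {c : ℂ}
  (hagree : ∀ v (hv : v ≠ 0), eval v h ≠ 0 →
    (Projectivization.mk ℂ v hv ∈ X ↔ Projectivization.mk ℂ v hv ∈ zeroLocus (Set.range f)))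
  (hc : c ≠ 0) (hh : eval (Fin.cons c 0 : Fin (N + 1) → ℂ) h ≠ 0)
include hagree hc hh

theorem vanishAt_of_dirLine_subset {u : Pr N} (hsub : dirLine u ⊆ X) :
    ∀ j, ∀ i ∈ Finset.Icc 1 (db j), VanishAt (fI j i) u := by
  intro j i hi
  rw [vanishAt_iff_eval_rep (hfI j i)]
  have hline : ∀ z : ℂ, AffineMap.lineMap (k := ℂ) (Fin.cons c 0 : Fin (N + 1) → ℂ)
      (Fin.cons c u.rep) z = Fin.cons c (z • u.rep) := fun z => by
    ext k; cases k using Fin.cases <;> simp [AffineMap.lineMap_apply_module]; ring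
  have hne : ∀ z : ℂ, (Fin.cons c (z • u.rep) : Fin (N + 1) → ℂ) ≠ 0 :=
    fun z h0 => hc (by simpa using congrFun h0 0)
  have hf : ∀ z : ℂ, eval (Fin.cons c (z • u.rep)) (f j) = 0 := fun z => by
    rw [← hline]
    refine eval_lineMap_eq_zero_of_eval_ne_zero_imp (z₁ := 0) (by simpa using hh) (fun z hz => ?_) z
    rw [hline] at hz ⊢
    have hmem := (mk_mem_dirLine_iff u (hne z)).mpr ((mem_dirPlane_iff _ _).mpr ⟨c, z, rfl⟩)
    exact (hagree _ (hne z) hz).mp (hsub hmem) _ ⟨j, rfl⟩ _ _ rfl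
  have hcoeff := Polynomial.eq_zero_of_forall_sum_mul_pow_eq_zero
    (fun z => by rw [← eval_cons_smul_eq_sum (hfI j) (hdec j), hf z]) hi
  exact (mul_eq_zero.mp hcoeff).resolve_left (pow_ne_zero _ hc)

theorem dirLine_subset_of_vanishAt {S : Set (Poly (N + 1))} (hXS : X = zeroLocus S)
    (hp : pt0 N ∈ X)
    {u : Pr N} (hvan : ∀ j, ∀ i ∈ Finset.Icc 1 (db j), VanishAt (fI j i) u) :
    dirLine u ⊆ X := by
  have hlineF : dirLine u ⊆ zeroLocus (Set.range f) :=
    dirLine_subset_zeroLocus hfI hdec fun j i hi => hvan j i hi _ u.rep_nonzero u.mk_rep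
  subst hXS
  intro x hx
  obtain rfl | hxp := eq_or_ne x (pt0 N)
  · exact hp
  rintro g hg v hv rfl
  set e : Fin (N + 1) → ℂ := Fin.cons c 0
  have he : e ≠ 0 := fun h0 => hc (by simpa [e] using congrFun h0 0)
  have hep : Projectivization.mk ℂ e he = pt0 N := by
    rw [pt0, Projectivization.mk_eq_mk_iff' ℂ _ _ he (e0vec_ne N)]
    refine ⟨c, ?_⟩
    ext i; cases i using Fin.cases <;> simp [e, e0vec]
  have hne := Projectivization.lineMap_ne_zero_of_mk_ne (hxp.trans_eq hep.symm)
  have hspan : ∀ z : ℂ, AffineMap.lineMap v e z ∈ dirPlane u.rep := by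
    intro z
    have hv' := (mk_mem_dirLine_iff u hv).mp hx
    have he' : e ∈ dirPlane u.rep := (mem_dirPlane_iff _ _).mpr ⟨c, 0, by simp [e]⟩
    rw [AffineMap.lineMap_apply_module]
    exact add_mem (Submodule.smul_mem _ _ hv') (Submodule.smul_mem _ _ he')
  have hmemX : ∀ z, MvPolynomial.eval (AffineMap.lineMap v e z) h ≠ 0 →
      Projectivization.mk ℂ _ (hne z) ∈ zeroLocus S := fun z hz =>
    (hagree _ (hne z) hz).mpr (hlineF ((mk_mem_dirLine_iff u _).mpr (hspan z)))
  have hg0 := eval_lineMap_eq_zero_of_eval_ne_zero_imp (g := g) (z₁ := 1) (by simpa using hh)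
    (fun z hz => hmemX z hz g hg _ _ rfl) 0
  simpa only [AffineMap.lineMap_apply_zero] using hg0

end Components

/-- Lemma: equations for `F_p(X)`.  Let `X ⊆ ℙ^N` be a projective
scheme containing `p = [1:0:⋯:0]`, defined in a neighbourhood of `p` (the complement of
a closed set `Z ∌ p`) by the homogeneous polynomials `f_j` of degrees `d_j`, and write
`f_j = Σ_{i=1}^{d_j} x_0^{d_j-i} f_j^i` with `f_j^i ∈ ℂ[x_1,…,x_N]` homogeneous of
degree `i`.  Then, under the identification of the lines of `ℙ^N` through `p` with the
points of `ℙ^{N-1} = Proj ℂ[x_1,…,x_N]`, the moduli `F_p(X)` of lines on `X` through `p`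
is defined by the polynomials `f_j^i` (for `1 ≤ j ≤ r`, `1 ≤ i ≤ d_j`). -/
theorem lines_through_point_defined_by_components
    (N r : ℕ) (X : Set (Pr (N + 1)))
    (hX : IsAlgSet X) (hp : pt0 N ∈ X)
    (Z : Set (Pr (N + 1))) (hZ : IsAlgSet Z) (hpZ : pt0 N ∉ Z)
    (f : Fin r → Poly (N + 1)) (db : Fin r → ℕ)
    (fI : Fin r → ℕ → Poly N)
    (hfI : ∀ j i, (fI j i).IsHomogeneous i)
    (hdec : ∀ j, f j = ∑ i ∈ Finset.Icc 1 (db j),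
      MvPolynomial.X 0 ^ (db j - i) * emb (fI j i))
    (hloc : X \ Z = zeroLocus (Set.range f) \ Z) :
    ∀ u : Pr N, dirLine u ⊆ X ↔
      ∀ j, ∀ i ∈ Finset.Icc 1 (db j), VanishAt (fI j i) u := by
  obtain ⟨S, -, hXS⟩ := hX
  obtain ⟨T, -, rfl⟩ := hZ
  obtain ⟨h, hT, c, hc, hh⟩ := exists_eval_cons_ne_zero_of_pt0_notMem hpZ
  have hagree : ∀ v (hv : v ≠ 0), MvPolynomial.eval v h ≠ 0 →
      (Projectivization.mk ℂ v hv ∈ X ↔ Projectivization.mk ℂ v hv ∈ zeroLocus (Set.range f)) :=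
    fun v hv hvh => by
      have hZ : Projectivization.mk ℂ v hv ∉ zeroLocus T := fun hx => hvh (hx h hT v hv rfl)
      simpa [hZ] using Set.ext_iff.mp hloc (Projectivization.mk ℂ v hv)
  exact fun u => ⟨vanishAt_of_dirLine_subset hfI hdec hagree hc hh,
    dirLine_subset_of_vanishAt hfI hdec hagree hc hh hXS hp⟩

end PaperSC
end
end

section
/- Let X ⊂ P^N be a projective variety, p = [1:0:⋯:0] ∈ X, d = d_p(X), and let f_1, …, f_r be a basis of H^0(P^N, I_X ⊗ O_{P^N}(d)). Write f_j = Σ_{i=1}^{d} x_0^{d−i} f_j^i with f_j^i ∈ ℂ[x_1, …, x_N] homogeneous of degree i, and for 1 ≤ i ≤ d−1, 1 ≤ j ≤ r set D_j^i = (x_0^{i−1} f_j^1 + x_0^{i−2} f_j^2 + ⋯ + x_0 f_j^{i−1} + f_j^i = 0) ⊂ P^N (possibly all of P^N). Then X ∩ ⋂_{1 ≤ i ≤ d−1, 1 ≤ j ≤ r} D_j^i ⊆ Cone F_p(X), the projective cone over F_p(X) in P^N with vertex p. In particular, if there is no line on X through p (i.e., F_p(X) = ∅), then ⋂_{i,j}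 (D_j^i ∩ X) = {p}. -/
/-!
Common framework: classical projective geometry over ℂ, with projective space
`ℙ^{n-1} = Pr n` realized as the projectivization of `ℂ^n`, algebraic subsets as
zero loci of homogeneous polynomials, lines/linear subspaces via linear subspaces,
degree and multiplicity of curves via hyperplane counting, the Seshadri constant
of `O_X(1)` at a point via the curve-infimum formula, and the invariant `d_p(X)`
via local generation of the ideal sheaf by forms of a given degree.
-/

open scoped Classical
open Function Set

noncomputable section

/-!
Let `x ≠ p` lie on `X` and on every `D_j^i`, and write `x = [x_0 : v]`. The equations of
`D_j^1, …, D_j^{d-1}` together with `f_j(x) = 0` form a triangular system in the values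
`f_j^i(v)`, so these all vanish and every `f_j` vanishes on the line `px`. As the forms of
degree `d` cut out `X` near `p`, every equation `g` of `X` satisfies `s g ∈ (f_1, …, f_r)`
near `p` for some `s` with `s(p) ≠ 0`; restricted to the line, `s` is a nonzero polynomial,
so `g` vanishes on the line too, and `px ⊆ X`.
-/

open MvPolynomial

section LineRestriction

variable {σ K : Type*}

theorem MvPolynomial.eval_eq_zero_of_mem_span {ι : Type*} [CommSemiring K]
    {f : ι → MvPolynomial σ K} {a : σ → K} (hf : ∀ j, eval a (f j) = 0)
    {h : MvPolynomial σ K} (hh : h ∈ Submodule.span K (Set.range f)) : eval a h = 0 :=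
  (Submodule.span_le (p := LinearMap.ker (aeval a).toLinearMap)).mpr
    (Set.range_subset_iff.mpr hf) hh

theorem MvPolynomial.IsHomogeneous.eval_smul_s5 [CommSemiring K] {e : ℕ} {g : MvPolynomial σ K}
    (hg : g.IsHomogeneous e) (c : K) (x : σ → K) :
    eval (c • x) g = c ^ e * eval x g := by
  rw [eval_eq, eval_eq, Finset.mul_sum]
  refine Finset.sum_congr rfl fun m hm => ?_
  have hdeg : ∑ i ∈ m.support, m i = e := by
    simpa [Finsupp.weight_apply, Finsupp.sum] using hg (mem_support_iff.mp hm)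
  rw [← hdeg, ← Finset.prod_pow_eq_pow_sum, mul_left_comm, ← Finset.prod_mul_distrib]
  simp only [Pi.smul_apply, smul_eq_mul, mul_pow]

variable [Field K]

def MvPolynomial.restrictLine (a b : σ → K) (g : MvPolynomial σ K) : Polynomial K :=
  aeval (fun i => Polynomial.C (a i) + Polynomial.X * Polynomial.C (b i)) g

theorem MvPolynomial.eval_restrictLine (a b : σ → K) (g : MvPolynomial σ K) (μ : K) :
    (restrictLine a b g).eval μ = eval (a + μ • b) g := by
  rw [restrictLine, ← Polynomial.coe_aeval_eq_eval, ← AlgHom.comp_apply, comp_aeval]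
  have hpt : (fun i => Polynomial.aeval μ
      (Polynomial.C (a i) + Polynomial.X * Polynomial.C (b i))) = a + μ • b := by
    funext i
    simp only [map_add, map_mul, Polynomial.aeval_C, Polynomial.aeval_X,
      Algebra.algebraMap_self, RingHom.id_apply, Pi.add_apply, Pi.smul_apply, smul_eq_mul]
  rw [hpt]
  rfl

variable [Infinite K]

theorem MvPolynomial.eval_line_eq_zero_of_finite {g : MvPolynomial σ K} {a b : σ → K}
    {s : Set K} (hs : s.Finite) (h : ∀ μ ∉ s, eval (a + μ • b) g = 0) (μ : K) :
    eval (a + μ • b) g = 0 := by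
  have hzero : restrictLine a b g = 0 :=
    Polynomial.eq_zero_of_infinite_isRoot _ <| hs.infinite_compl.mono fun ν hν => by
      simpa [eval_restrictLine] using h ν hν
  rw [← eval_restrictLine, hzero, Polynomial.eval_zero]

theorem MvPolynomial.eval_line_eq_zero_of_mul_eq_zero {s g : MvPolynomial σ K} {a b : σ → K}
    (hs : eval a s ≠ 0) (h : ∀ μ : K, eval (a + μ • b) s * eval (a + μ • b) g = 0) (μ : K) :
    eval (a + μ • b) g = 0 := by
  have hs' : restrictLine a b s ≠ 0 := fun h0 => hs <| by
    simpa [eval_restrictLine] using congrArg (Polynomial.eval 0) h0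
  refine eval_line_eq_zero_of_finite (Polynomial.finite_setOfPred_isRoot hs') (fun ν hν => ?_) μ
  exact (mul_eq_zero.mp (h ν)).resolve_left (by simpa [eval_restrictLine] using hν)

theorem MvPolynomial.IsHomogeneous.eval_eq_zero_of_mem_span_pair {e : ℕ}
    {g : MvPolynomial σ K} (hg : g.IsHomogeneous e) {a b : σ → K}
    (h : ∀ μ : K, eval (a + μ • b) g = 0) {u : σ → K} (hu : u ∈ Submodule.span K {a, b}) :
    eval u g = 0 := by
  obtain ⟨t, c, rfl⟩ := Submodule.mem_span_pair.mp hu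
  -- For `t ≠ 0` the point rescales to one on the line; `t = 0` is then forced, as
  -- `t ↦ eval (c • b + t • a) g` is a polynomial.
  have away : ∀ t : K, t ≠ 0 → eval (c • b + t • a) g = 0 := fun t ht => by
    rw [show c • b + t • a = t • (a + (c / t) • b) by
      rw [smul_add, smul_smul, mul_div_cancel₀ c ht, add_comm]]
    rw [hg.eval_smul_s5, h, mul_zero]
  rw [add_comm]
  exact eval_line_eq_zero_of_finite (Set.finite_singleton 0) away t

end LineRestriction

theorem eq_zero_of_forall_sum_Icc_pow_mul_eq_zero {R : Type*} [Semiring R] (c : R)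
    {a : ℕ → R} {d : ℕ} (h : ∀ k ∈ Finset.Icc 1 d, ∑ m ∈ Finset.Icc 1 k, c ^ (k - m) * a m = 0) :
    ∀ k ∈ Finset.Icc 1 d, a k = 0 := by
  intro k
  induction k using Nat.strong_induction_on with
  | _ k ih =>
    intro hk
    obtain ⟨hk1, hkd⟩ := Finset.mem_Icc.mp hk
    have hsum := h k hk
    rwa [Finset.sum_eq_single_of_mem k (Finset.mem_Icc.mpr ⟨hk1, le_rfl⟩), Nat.sub_self,
      pow_zero, one_mul] at hsum
    intro m hm hmk
    obtain ⟨hm1, hmk'⟩ := Finset.mem_Icc.mp hm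
    rw [ih m (lt_of_le_of_ne hmk' hmk) (Finset.mem_Icc.mpr ⟨hm1, by omega⟩), mul_zero]

namespace PaperSC

section ProjectiveSpace

variable {n : ℕ}

theorem vanishAt_of_forall_mem_submodule {g : Poly n} {x : Pr n}
    (h : ∀ u ∈ x.submodule, eval u g = 0) : VanishAt g x := by
  rintro v hv rfl
  exact h v (by rw [Projectivization.submodule_mk]; exact Submodule.mem_span_singleton_self v)

theorem mem_of_forall_vanishAt {X : Set (Pr n)} (hX : IsAlgSet X) {x : Pr n}
    (hx : ∀ g ∈ vanPolys X, VanishAt g x) : x ∈ X := by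
  obtain ⟨S, hS, rfl⟩ := hX
  intro g hg
  obtain ⟨e, he⟩ := hS g hg
  exact hx g (Set.mem_iUnion.mpr ⟨e, he, fun y hy => hy g hg⟩)

theorem setOf_submodule_le_subset {X : Set (Pr n)} (hX : IsAlgSet X)
    {W : Submodule ℂ (Fin n → ℂ)} (hW : ∀ g ∈ vanPolys X, ∀ u ∈ W, eval u g = 0) :
    {y : Pr n | y.submodule ≤ W} ⊆ X :=
  fun _ hy => mem_of_forall_vanishAt hX fun g hg =>
    vanishAt_of_forall_mem_submodule fun u hu => hW g hg u (hy hu)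

theorem isLine_setOf_submodule_le_span_pair {a b : Fin n → ℂ}
    (hab : LinearIndependent ℂ ![a, b]) :
    IsLine {y : Pr n | y.submodule ≤ Submodule.span ℂ {a, b}} := by
  refine ⟨_, ?_, rfl⟩
  rw [← Matrix.range_cons_cons_empty a b ![], finrank_span_eq_card hab, Fintype.card_fin]

theorem X_pow_mul_mem_homVan {X : Set (Pr n)} {e : ℕ} {t : Poly n} (ht : t ∈ homVan X e)
    (i : Fin n) (k : ℕ) : MvPolynomial.X i ^ k * t ∈ homVan X (k + e) := by
  refine ⟨by simpa using ((isHomogeneous_X ℂ i).pow k).mul ht.1, fun x hx v hv hmk => ?_⟩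
  simp [ht.2 x hx v hv hmk]

theorem subst1_X_pow_mul (i : Fin n) (k : ℕ) (t : Poly n) :
    subst1 i (MvPolynomial.X i ^ k * t) = subst1 i t := by
  simp [subst1]

theorem eval_subst1 (i : Fin n) (f : Poly n) (a : Fin n → ℂ) :
    eval a (subst1 i f) = eval (Function.update a i 1) f := by
  change aeval a (bind₁ _ f) = aeval (Function.update a i 1) f
  rw [aeval_bind₁]
  congr 2
  funext j
  rcases eq_or_ne j i with rfl | h
  · simp
  · simp [h]

/-- Hilbert's basis theorem: finitely many forms generate the homogeneous ideal, and
multiplying them by powers of `x_i` brings them to a common degree without changing their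
dehomogenizations. -/
theorem exists_cutOutAt (X : Set (Pr n)) (p : Pr n) : ∃ d, CutOutAt X p d := by
  obtain ⟨T, hTX, hT⟩ := (Submodule.fg_span_iff_fg_span_finset_subset (vanPolys X)).mp
    (IsNoetherian.noetherian (Ideal.span (vanPolys X)))
  choose! deg hdeg using fun t (ht : t ∈ vanPolys X) => Set.mem_iUnion.mp ht
  obtain ⟨i, hi⟩ : ∃ i, p.rep i ≠ 0 := Function.ne_iff.mp p.rep_nonzero
  refine ⟨T.sup deg, fun g hg => ⟨i, 1, hi, by simp, ?_⟩⟩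
  have hgT : subst1 i g ∈ Ideal.span (subst1 i '' (T : Set (Poly n))) := by
    rw [← Ideal.map_span]
    exact Ideal.mem_map_of_mem _
      (show g ∈ Submodule.span (Poly n) T from hT ▸ Ideal.subset_span hg)
  rw [one_mul]
  refine Ideal.span_mono ?_ hgT
  rintro _ ⟨t, ht, rfl⟩
  refine ⟨_, ?_, subst1_X_pow_mul i (T.sup deg - deg t) t⟩
  simpa [Nat.sub_add_cancel (Finset.le_sup ht)] using
    X_pow_mul_mem_homVan (hdeg t (hTX ht)) i (T.sup deg - deg t)

theorem cutOutAt_dP (X : Set (Pr n)) (p : Pr n) : CutOutAt X p (dP X p) :=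
  Nat.sInf_mem (exists_cutOutAt X p)

end ProjectiveSpace

section BasePoint

variable {N : ℕ}

theorem exists_rep_pt0_eq_smul (N : ℕ) : ∃ c : ℂ, c ≠ 0 ∧ (pt0 N).rep = c • e0vec N := by
  obtain ⟨c, hc⟩ := (Projectivization.mk_eq_mk_iff' ℂ _ _ (pt0 N).rep_nonzero (e0vec_ne N)).mp
    (pt0 N).mk_rep
  exact ⟨c, fun h => (pt0 N).rep_nonzero (by simp [← hc, h]), hc.symm⟩

theorem eq_zero_of_rep_pt0_ne_zero {i : Fin (N + 1)} (hi : (pt0 N).rep i ≠ 0) : i = 0 := by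
  obtain ⟨c, -, hrep⟩ := exists_rep_pt0_eq_smul N
  cases i using Fin.cases with
  | zero => rfl
  | succ j => simp [hrep, e0vec] at hi

theorem acoord_zero_pt0 (N : ℕ) : acoord 0 (pt0 N) = e0vec N := by
  obtain ⟨c, hc, hrep⟩ := exists_rep_pt0_eq_smul N
  funext j
  simp [acoord, hrep, show e0vec N 0 = 1 from rfl, hc]

theorem mk_eq_pt0_of_tail_eq_zero {w : Fin (N + 1) → ℂ} (hw : w ≠ 0) (h : Fin.tail w = 0) :
    Projectivization.mk ℂ w hw = pt0 N := by
  have hcons : w = Fin.cons (w 0) 0 := by rw [← h, Fin.cons_self_tail]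
  refine (Projectivization.mk_eq_mk_iff' ℂ _ _ hw (e0vec_ne N)).mpr ⟨w 0, ?_⟩
  rw [hcons]
  funext j
  cases j using Fin.cases <;> simp [e0vec]

theorem e0vec_add_smul_cons_zero (v : Fin N → ℂ) (μ : ℂ) :
    e0vec N + μ • (Fin.cons 0 v : Fin (N + 1) → ℂ) = Fin.cons 1 (μ • v) := by
  funext j
  cases j using Fin.cases <;> simp [e0vec]

theorem linearIndependent_e0vec_cons_zero {v : Fin N → ℂ} (hv : v ≠ 0) :
    LinearIndependent ℂ ![e0vec N, Fin.cons 0 v] := by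
  rw [LinearIndependent.pair_iff]
  intro s t hst
  have h0 : s = 0 := by simpa [e0vec] using congrFun hst 0
  have htail : t • v = 0 := funext fun k => by simpa [e0vec] using congrFun hst k.succ
  exact ⟨h0, (smul_eq_zero.mp htail).resolve_right hv⟩

end BasePoint

section Divisors

variable {N : ℕ}

/-- The equation `x_0^{i-1} q_1 + ⋯ + x_0 q_{i-1} + q_i` of the divisor `D^i`, where `q_k` is
the component of degree `k` of a form of degree `d`. -/
def partialForm (q : ℕ → Poly N) (i : ℕ) : Poly (N + 1) :=
  ∑ k ∈ Finset.Icc 1 i, MvPolynomial.X 0 ^ (i - k) * emb (q k)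

theorem eval_partialForm (q : ℕ → Poly N) (i : ℕ) (w : Fin (N + 1) → ℂ) :
    eval w (partialForm q i) = ∑ k ∈ Finset.Icc 1 i, w 0 ^ (i - k) * eval (Fin.tail w) (q k) := by
  simp only [partialForm, emb, map_sum, map_mul, map_pow, eval_X, eval_rename]
  rfl

theorem eval_tail_rep_eq_zero_of_vanishAt {q : ℕ → Poly N} {d : ℕ} {x : Pr (N + 1)}
    (h : ∀ i ∈ Finset.Icc 1 d, VanishAt (partialForm q i) x) :
    ∀ k ∈ Finset.Icc 1 d, eval (Fin.tail x.rep) (q k) = 0 :=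
  eq_zero_of_forall_sum_Icc_pow_mul_eq_zero (x.rep 0) fun i hi => by
    rw [← eval_partialForm]
    exact h i hi _ _ x.mk_rep

theorem eval_cons_smul_partialForm {q : ℕ → Poly N} (hq : ∀ k, (q k).IsHomogeneous k)
    {d : ℕ} {v : Fin N → ℂ} (hv : ∀ k ∈ Finset.Icc 1 d, eval v (q k) = 0) (t μ : ℂ) :
    eval (Fin.cons t (μ • v)) (partialForm q d) = 0 := by
  rw [eval_partialForm]
  refine Finset.sum_eq_zero fun k hk => ?_
  simp [(hq k).eval_smul_s5, hv k hk]

theorem vanishAt_partialForm_pt0 {q : ℕ → Poly N} (hq : ∀ k, (q k).IsHomogeneous k) (i : ℕ) :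
    VanishAt (partialForm q i) (pt0 N) := by
  refine vanishAt_of_forall_mem_submodule fun u hu => ?_
  rw [pt0, Projectivization.submodule_mk] at hu
  obtain ⟨c, rfl⟩ := Submodule.mem_span_singleton.mp hu
  rw [eval_partialForm]
  refine Finset.sum_eq_zero fun k hk => ?_
  have htail : Fin.tail (c • e0vec N) = (0 : ℂ) • 0 := by
    funext j
    simp [e0vec, Fin.tail]
  rw [htail, (hq k).eval_smul_s5, zero_pow (by grind), zero_mul, mul_zero]

theorem eval_line_eq_zero_of_cutOutAt {X : Set (Pr (N + 1))} {d : ℕ}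
    (hcut : CutOutAt X (pt0 N) d) {b : Fin (N + 1) → ℂ} (hb : b 0 = 0)
    (hforms : ∀ h ∈ homVan X d, ∀ μ : ℂ, eval (e0vec N + μ • b) h = 0)
    {g : Poly (N + 1)} (hg : g ∈ vanPolys X) (μ : ℂ) : eval (e0vec N + μ • b) g = 0 := by
  obtain ⟨i, s, hi, hs, hsg⟩ := hcut g hg
  obtain rfl := eq_zero_of_rep_pt0_ne_zero hi
  rw [acoord_zero_pt0] at hs
  refine eval_line_eq_zero_of_mul_eq_zero (by simpa using hs) (fun ν => ?_) μ
  have hupdate : Function.update (e0vec N + ν • b) 0 1 = e0vec N + ν • b := by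
    simp [hb, e0vec]
  have hker : Ideal.span (subst1 0 '' homVan X d) ≤
      RingHom.ker (MvPolynomial.eval (e0vec N + ν • b)) := by
    rw [Ideal.span_le]
    rintro _ ⟨h, hh, rfl⟩
    simpa [eval_subst1, hupdate] using hforms h hh ν
  simpa [eval_subst1, hupdate] using hker hsg

theorem mem_coneOfLines_of_vanishAt_partialForm {X : Set (Pr (N + 1))} (hX : IsAlgSet X)
    {d r : ℕ} (hcut : CutOutAt X (pt0 N) d) {fI : Fin r → ℕ → Poly N}
    (hfI : ∀ j k, (fI j k).IsHomogeneous k)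
    (hspan : ∀ g ∈ homVan X d,
      g ∈ Submodule.span ℂ (Set.range fun j => partialForm (fI j) d))
    {x : Pr (N + 1)}
    (hx : ∀ j, ∀ i ∈ Finset.Icc 1 d, VanishAt (partialForm (fI j) i) x) :
    x ∈ coneOfLines X (pt0 N) := by
  by_cases hxp : x = pt0 N
  · exact Or.inl hxp
  set v : Fin N → ℂ := Fin.tail x.rep
  have hv : v ≠ 0 := fun h => hxp <| by
    rw [← mk_eq_pt0_of_tail_eq_zero x.rep_nonzero h, x.mk_rep]
  have hforms : ∀ h ∈ homVan X d, ∀ μ : ℂ, eval (e0vec N + μ • Fin.cons 0 v) h = 0 := by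
    intro h hh μ
    rw [e0vec_add_smul_cons_zero]
    exact eval_eq_zero_of_mem_span (fun j => eval_cons_smul_partialForm (hfI j)
      (eval_tail_rep_eq_zero_of_vanishAt (hx j)) 1 μ) (hspan h hh)
  set L := {y : Pr (N + 1) | y.submodule ≤ Submodule.span ℂ {e0vec N, Fin.cons 0 v}}
  have hLX : L ⊆ X := setOf_submodule_le_subset hX fun g hg _ hu => by
    obtain ⟨e, hge, -⟩ := Set.mem_iUnion.mp hg
    exact hge.eval_eq_zero_of_mem_span_pair (eval_line_eq_zero_of_cutOutAt hcut rfl hforms hg) hu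
  have hpL : pt0 N ∈ L := by
    change (pt0 N).submodule ≤ _
    rw [pt0, Projectivization.submodule_mk]
    exact Submodule.span_mono (by simp)
  have hxL : x ∈ L := by
    change x.submodule ≤ _
    rw [Projectivization.submodule_eq, Submodule.span_singleton_le_iff_mem]
    refine Submodule.mem_span_pair.mpr ⟨x.rep 0, 1, funext fun j => ?_⟩
    cases j using Fin.cases <;> simp [e0vec, v, Fin.tail]
  exact Or.inr (Set.mem_biUnion
    ⟨isLine_setOf_submodule_le_span_pair (linearIndependent_e0vec_cons_zero hv), hLX, hpL⟩ hxL)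

end Divisors

theorem cap_divisors_subset_cone_general
    (N r : ℕ) (X : Set (Pr (N + 1)))
    (hX : IsSubvariety X) (hp : pt0 N ∈ X)
    (d : ℕ) (hd : d = dP X (pt0 N))
    (f : Fin r → Poly (N + 1))
    (hmem : ∀ j, f j ∈ homVan X d)
    (hspan : ∀ g ∈ homVan X d, g ∈ Submodule.span ℂ (Set.range f))
    (fI : Fin r → ℕ → Poly N)
    (hfI : ∀ j i, (fI j i).IsHomogeneous i)
    (hdec : ∀ j, f j = ∑ i ∈ Finset.Icc 1 d,
      MvPolynomial.X 0 ^ (d - i) * emb (fI j i)) :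
    (X ∩ ⋂ j, ⋂ i ∈ Finset.Icc 1 (d - 1),
        zeroLocus {∑ k ∈ Finset.Icc 1 i, MvPolynomial.X 0 ^ (i - k) * emb (fI j k)})
      ⊆ coneOfLines X (pt0 N) ∧
    (linesThrough X (pt0 N) = ∅ →
      X ∩ ⋂ j, ⋂ i ∈ Finset.Icc 1 (d - 1),
        zeroLocus {∑ k ∈ Finset.Icc 1 i, MvPolynomial.X 0 ^ (i - k) * emb (fI j k)}
      = {pt0 N}) := by
  obtain rfl : f = fun j => partialForm (fI j) d := funext hdec
  have hcut : CutOutAt X (pt0 N) d := hd ▸ cutOutAt_dP X (pt0 N)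
  have hcone : (X ∩ ⋂ j, ⋂ i ∈ Finset.Icc 1 (d - 1), zeroLocus {partialForm (fI j) i})
      ⊆ coneOfLines X (pt0 N) := by
    rintro x ⟨hxX, hxD⟩
    simp only [Set.mem_iInter] at hxD
    refine mem_coneOfLines_of_vanishAt_partialForm hX.1 hcut hfI hspan fun j i hi => ?_
    obtain ⟨hi1, hid⟩ := Finset.mem_Icc.mp hi
    rcases hid.lt_or_eq with hid | rfl
    · exact hxD j i (Finset.mem_Icc.mpr ⟨hi1, by omega⟩) _ rfl
    · exact (hmem j).2 x hxX
  refine ⟨hcone, fun hnone => Set.Subset.antisymm (fun x hx => ?_) ?_⟩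
  · simpa [coneOfLines, hnone] using hcone hx
  · rw [Set.singleton_subset_iff]
    refine ⟨hp, Set.mem_iInter.mpr fun j => Set.mem_iInter₂.mpr fun i _ => ?_⟩
    rintro _ rfl
    exact vanishAt_partialForm_pt0 (hfI j) i

/-- the divisors `D_j^i` cut out the cone over `F_p(X)`.
Let `X ⊆ ℙ^N` contain `p = [1:0:⋯:0]`, let `d = d_p(X)`, let `f_1, …, f_r` be a basis of
`H^0(ℙ^N, I_X ⊗ O(d))` and write `f_j = Σ_{i=1}^d x_0^{d-i} f_j^i` with `f_j^i`
homogeneous of degree `i` in `x_1,…,x_N`.  With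
`D_j^i = (x_0^{i-1} f_j^1 + ⋯ + x_0 f_j^{i-1} + f_j^i = 0)` (`1 ≤ i ≤ d-1`), one has
`X ∩ ⋂_{i,j} D_j^i ⊆ Cone F_p(X)`; in particular if no line of `X` passes through `p`
then `⋂_{i,j} (D_j^i ∩ X) = {p}`. -/
theorem cap_divisors_subset_cone
    (N r : ℕ) (X : Set (Pr (N + 1)))
    (hX : IsSubvariety X) (hp : pt0 N ∈ X)
    (d : ℕ) (hd : d = dP X (pt0 N))
    (f : Fin r → Poly (N + 1))
    (hmem : ∀ j, f j ∈ homVan X d)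
    (hindep : LinearIndependent ℂ f)
    (hspan : ∀ g ∈ homVan X d, g ∈ Submodule.span ℂ (Set.range f))
    (fI : Fin r → ℕ → Poly N)
    (hfI : ∀ j i, (fI j i).IsHomogeneous i)
    (hdec : ∀ j, f j = ∑ i ∈ Finset.Icc 1 d,
      MvPolynomial.X 0 ^ (d - i) * emb (fI j i)) :
    (X ∩ ⋂ j, ⋂ i ∈ Finset.Icc 1 (d - 1),
        zeroLocus {∑ k ∈ Finset.Icc 1 i, MvPolynomial.X 0 ^ (i - k) * emb (fI j k)})
      ⊆ coneOfLines X (pt0 N) ∧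
    (linesThrough X (pt0 N) = ∅ →
      X ∩ ⋂ j, ⋂ i ∈ Finset.Icc 1 (d - 1),
        zeroLocus {∑ k ∈ Finset.Icc 1 i, MvPolynomial.X 0 ^ (i - k) * emb (fI j k)}
      = {pt0 N}) :=
  cap_divisors_subset_cone_general N r X hX hp d hd f hmem hspan fI hfI hdec

end PaperSC
end
end
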